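/- arXiv:1611.03294 — 2 statements merged into one kernel-verified Lean document; each statement's English description precedes it below -/
import Mathlib

section
/- Let R be a rectangle with horizontal dimension at least 2 and vertical dimension at least 1, and let A ⊂ R be any set of sites. Then R is up-traversable by A if and only if the closure ⟨A⟩ contains a spanning pair for every row of R. -/
open Real

def nbhd : Finset (ℤ × ℤ) := {(-2,0), (-1,0), (0,-1), (0,1), (1,0), (2,0)}

def bootOp (N : Finset (ℤ × ℤ)) (r : ℕ) (S : Set (ℤ × ℤ)) : Set (ℤ × ℤ) :=
  S ∪ {v | r ≤ (((fun n => v + n) '' (N : Set (ℤ × ℤ))) ∩ S).ncard}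

def bsClosure (N : Finset (ℤ × ℤ)) (r : ℕ) (S : Set (ℤ × ℤ)) : Set (ℤ × ℤ) :=
  ⋃ t : ℕ, (bootOp N r)^[t] S

noncomputable def rectF (a b c d : ℤ) : Finset (ℤ × ℤ) := Finset.Icc a b ×ˢ Finset.Icc c d

open Classical in
noncomputable def prob (F : Finset (ℤ × ℤ)) (p : ℝ) (E : Set (ℤ × ℤ) → Prop) : ℝ :=
  ∑ T ∈ F.powerset, if E (T : Set (ℤ × ℤ)) then p ^ T.card * (1 - p) ^ (F.card - T.card) else 0

def internallyFilled (N : Finset (ℤ × ℤ)) (r : ℕ) (R S : Set (ℤ × ℤ)) : Prop :=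
  R ⊆ bsClosure N r (S ∩ R)

def upTrav (a b c d : ℤ) (S : Set (ℤ × ℤ)) : Prop :=
  (rectF a b c d : Set (ℤ × ℤ)) ⊆
    bsClosure nbhd 3 (((rectF a b c d : Set (ℤ × ℤ)) ∩ S) ∪ (rectF a b (c-1) (c-1) : Set (ℤ × ℤ)))

def spanningPair (a b c : ℤ) (P : Set (ℤ × ℤ)) : Prop :=
  (rectF a b c c : Set (ℤ × ℤ)) ⊆ bsClosure nbhd 3 (P ∪ (rectF a b (c-1) (c-1) : Set (ℤ × ℤ)))

/-!
Backward direction: the rows of `R` fill one at a time from the bottom, each from its spanning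
pair in `⟨A⟩` together with the already filled row below it.

Forward direction: two sites of row `j` at horizontal distance at most 4, or a site of row `j`
and one of row `j + 1` at horizontal distance 1 or 2, always span row `j`. If `T = ⟨A⟩`
contained no spanning pair for row `j`, it would contain no such pair, and then `T` together with
the half-plane below row `j` would be closed: a site of row `j` outside `T` would need two
neighbours in `T` besides the one below it, and any two of these form such a pair. This closed set
contains `A` and the row `c - 1`, hence all of `R` when `R` is up-traversable; so row `j` of `R`
lies in `T`, and `(a, j), (a + 1, j)` is a spanning pair after all.
-/

section Closure

variable {N : Finset (ℤ × ℤ)} {r : ℕ}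

lemma subset_bootOp (S : Set (ℤ × ℤ)) : S ⊆ bootOp N r S :=
  Set.subset_union_left

lemma bootOp_mono {S T : Set (ℤ × ℤ)} (h : S ⊆ T) : bootOp N r S ⊆ bootOp N r T := by
  rintro v (hv | hv)
  · exact Or.inl (h hv)
  · exact Or.inr (hv.trans (Set.ncard_le_ncard (Set.inter_subset_inter_right _ h)
      ((Set.toFinite _).inter_of_left _)))

lemma subset_bsClosure (S : Set (ℤ × ℤ)) : S ⊆ bsClosure N r S :=
  Set.subset_iUnion_of_subset 0 le_rfl

lemma monotone_iterate_bootOp (S : Set (ℤ × ℤ)) : Monotone fun t => (bootOp N r)^[t] S :=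
  monotone_nat_of_le_succ fun t => by
    rw [Function.iterate_succ_apply']
    exact subset_bootOp _

lemma bootOp_bsClosure_subset (S : Set (ℤ × ℤ)) :
    bootOp N r (bsClosure N r S) ⊆ bsClosure N r S := by
  rintro v (hv | hv)
  · exact hv
  -- the finitely many neighbours of `v` in the closure all appear in a single iterate
  have hfin : ((fun n => v + n) '' (N : Set (ℤ × ℤ)) ∩ bsClosure N r S).Finite :=
    (Set.toFinite _).inter_of_left _
  obtain ⟨t, ht⟩ :=
    (monotone_iterate_bootOp S).directed_le.exists_mem_subset_of_finset_subset_biUnion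
      (s := hfin.toFinset) (by rw [Set.Finite.coe_toFinset]; exact Set.inter_subset_right)
  refine Set.mem_iUnion_of_mem (t + 1) ?_
  rw [Function.iterate_succ_apply']
  refine Or.inr (hv.trans (Set.ncard_le_ncard (fun e he => Set.mem_inter he.1 (ht ?_))
    ((Set.toFinite _).inter_of_left _)))
  rwa [Set.Finite.coe_toFinset]

lemma bsClosure_subset_of_bootOp_subset {S U : Set (ℤ × ℤ)} (hSU : S ⊆ U)
    (hU : bootOp N r U ⊆ U) : bsClosure N r S ⊆ U := by
  refine Set.iUnion_subset fun t => ?_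
  induction t with
  | zero => exact hSU
  | succ t ih =>
    rw [Function.iterate_succ_apply']
    exact (bootOp_mono ih).trans hU

lemma subset_bsClosure_iff {S T : Set (ℤ × ℤ)} :
    T ⊆ bsClosure N r S ↔ ∀ C, bootOp N r C ⊆ C → S ⊆ C → T ⊆ C :=
  ⟨fun h _ hC hSC => h.trans (bsClosure_subset_of_bootOp_subset hSC hC),
    fun h => h _ (bootOp_bsClosure_subset S) (subset_bsClosure S)⟩

lemma mem_bootOp_of_three {S : Set (ℤ × ℤ)} {v u₁ u₂ u₃ : ℤ × ℤ}
    (h₁ : u₁ - v ∈ N) (h₂ : u₂ - v ∈ N) (h₃ : u₃ - v ∈ N)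
    (h₁₂ : u₁ ≠ u₂) (h₁₃ : u₁ ≠ u₃) (h₂₃ : u₂ ≠ u₃)
    (m₁ : u₁ ∈ S) (m₂ : u₂ ∈ S) (m₃ : u₃ ∈ S) : v ∈ bootOp N 3 S := by
  refine Or.inr ?_
  have hsub : ({u₁, u₂, u₃} : Set (ℤ × ℤ)) ⊆ (fun n => v + n) '' (N : Set (ℤ × ℤ)) ∩ S := by
    rintro e (rfl | rfl | rfl) <;> exact ⟨⟨_, by assumption, add_sub_cancel v _⟩, by assumption⟩
  calc 3 = ({u₁, u₂, u₃} : Set (ℤ × ℤ)).ncard :=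
        (Set.ncard_eq_three.2 ⟨_, _, _, h₁₂, h₁₃, h₂₃, rfl⟩).symm
    _ ≤ _ := Set.ncard_le_ncard hsub ((Set.toFinite _).inter_of_left _)

end Closure

lemma mem_nbhd_iff {n : ℤ × ℤ} :
    n ∈ nbhd ↔ (n.2 = 0 ∧ n.1 ≠ 0 ∧ -2 ≤ n.1 ∧ n.1 ≤ 2) ∨ n = (0, 1) ∨ n = (0, -1) := by
  obtain ⟨x, y⟩ := n
  simp only [nbhd, Finset.mem_insert, Finset.mem_singleton, Prod.mk.injEq]
  omega

@[simp]
lemma mem_rectF {a b c d : ℤ} {p : ℤ × ℤ} :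
    p ∈ rectF a b c d ↔ a ≤ p.1 ∧ p.1 ≤ b ∧ c ≤ p.2 ∧ p.2 ≤ d := by
  simp only [rectF, Finset.mem_product, Finset.mem_Icc, and_assoc]

lemma rectF_row_subset_iff {a b j : ℤ} {C : Set (ℤ × ℤ)} :
    (rectF a b j j : Set (ℤ × ℤ)) ⊆ C ↔ ∀ z, a ≤ z → z ≤ b → (z, j) ∈ C := by
  refine ⟨fun h z hz hzb => h (mem_rectF.2 ⟨hz, hzb, le_rfl, le_rfl⟩), ?_⟩
  rintro h ⟨z, y⟩ hp
  obtain ⟨hz, hzb, hjy, hyj⟩ := mem_rectF.1 hp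
  obtain rfl : y = j := le_antisymm hyj hjy
  exact h z hz hzb

lemma bootOp_rectF_subset (a b c d : ℤ) :
    bootOp nbhd 3 (rectF a b c d : Set (ℤ × ℤ)) ⊆ rectF a b c d := by
  rintro ⟨x, y⟩ (hv | hv)
  · exact hv
  by_contra hvR
  simp only [Finset.mem_coe, mem_rectF, not_and_or, not_le] at hvR
  obtain ⟨n₁, n₂, hn⟩ : ∃ n₁ n₂ : ℤ × ℤ, ∀ n ∈ nbhd,
      (x, y) + n ∈ (rectF a b c d : Set (ℤ × ℤ)) → n = n₁ ∨ n = n₂ := by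
    rcases (by omega : x < a ∧ c ≤ y ∧ y ≤ d ∨ b < x ∧ c ≤ y ∧ y ≤ d ∨ y < c ∨ d < y)
      with h | h | h <;>
      [refine ⟨(1, 0), (2, 0), ?_⟩; refine ⟨(-1, 0), (-2, 0), ?_⟩; refine ⟨(0, 1), (0, -1), ?_⟩] <;>
      rintro ⟨k, l⟩ hn hnR <;>
      simp only [mem_nbhd_iff, Finset.mem_coe, mem_rectF, Prod.mk_add_mk, Prod.mk.injEq]
        at hn hnR ⊢ <;>
      omega
  have : ((fun n => (x, y) + n) '' (nbhd : Set (ℤ × ℤ)) ∩ rectF a b c d).ncard ≤ 2 :=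
    calc _ ≤ ({(x, y) + n₁, (x, y) + n₂} : Set (ℤ × ℤ)).ncard := by
          refine Set.ncard_le_ncard ?_
          rintro _ ⟨⟨n, hn', rfl⟩, hnR⟩
          rcases hn n hn' hnR with rfl | rfl <;> simp
      _ ≤ 2 := (Set.ncard_insert_le _ _).trans (by simp)
  exact absurd (hv.trans this) (by omega)

section RowFilling

variable {C : Set (ℤ × ℤ)} (hC : bootOp nbhd 3 C ⊆ C)
include hC

lemma mem_of_below_of_two_in_row {x y s t : ℤ} (hbelow : (x, y - 1) ∈ C) (hsC : (s, y) ∈ C)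
    (htC : (t, y) ∈ C) (hs : s ≠ x := by omega) (ht : t ≠ x := by omega)
    (hst : s ≠ t := by omega) (hs₁ : x ≤ s + 2 := by omega) (hs₂ : s ≤ x + 2 := by omega)
    (ht₁ : x ≤ t + 2 := by omega) (ht₂ : t ≤ x + 2 := by omega) : (x, y) ∈ C :=
  hC <| mem_bootOp_of_three (u₁ := (s, y)) (u₂ := (t, y)) (u₃ := (x, y - 1))
    (by simp [mem_nbhd_iff]; omega) (by simp [mem_nbhd_iff]; omega) (by simp [mem_nbhd_iff])
    (by simp [hst]) (by simp [hs]) (by simp [ht]) hsC htC hbelow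

lemma mem_of_below_of_above_of_in_row {x y s : ℤ} (hbelow : (x, y - 1) ∈ C)
    (habove : (x, y + 1) ∈ C) (hsC : (s, y) ∈ C) (hs : s ≠ x := by omega)
    (hs₁ : x ≤ s + 2 := by omega) (hs₂ : s ≤ x + 2 := by omega) : (x, y) ∈ C :=
  hC <| mem_bootOp_of_three (u₁ := (s, y)) (u₂ := (x, y + 1)) (u₃ := (x, y - 1))
    (by simp [mem_nbhd_iff]; omega) (by simp [mem_nbhd_iff]) (by simp [mem_nbhd_iff])
    (by simp [hs]) (by simp [hs]) (by simp; omega) hsC habove hbelow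

variable {a b j : ℤ} (hbelow : ∀ z, a ≤ z → z ≤ b → (z, j - 1) ∈ C)
include hbelow

lemma row_mem_of_adjacent_pair {x : ℤ} (hx : a ≤ x) (hxb : x + 1 ≤ b)
    (h₀ : (x, j) ∈ C) (h₁ : (x + 1, j) ∈ C) : ∀ z, a ≤ z → z ≤ b → (z, j) ∈ C := by
  have right : ∀ z, x + 1 ≤ z → z ≤ b → (z - 1, j) ∈ C ∧ (z, j) ∈ C := by
    intro z hz
    induction z, hz using Int.leInduction with
    | base => exact fun _ => ⟨by simpa using h₀, h₁⟩
    | succ z hz ih =>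
      intro hzb
      obtain ⟨hz₁, hz₂⟩ := ih (by omega)
      exact ⟨by simpa using hz₂,
        mem_of_below_of_two_in_row hC (hbelow _ (by omega) hzb) hz₂ hz₁⟩
  have left : ∀ z, z ≤ x → a ≤ z → (z, j) ∈ C ∧ (z + 1, j) ∈ C := by
    intro z hz
    induction z, hz using Int.leInductionDown with
    | base => exact fun _ => ⟨h₀, h₁⟩
    | pred z hz ih =>
      intro hza
      obtain ⟨hz₁, hz₂⟩ := ih (by omega)
      exact ⟨mem_of_below_of_two_in_row hC (hbelow _ hza (by omega)) hz₁ hz₂,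
        by simpa using hz₁⟩
  intro z hza hzb
  rcases le_or_gt z x with hzx | hxz
  · exact (left z hzx hza).1
  · exact (right z hxz hzb).2

lemma row_mem_of_pair_in_row {p q : ℤ} (hp : a ≤ p) (hpq : p < q) (hqp : q ≤ p + 4) (hqb : q ≤ b)
    (hpC : (p, j) ∈ C) (hqC : (q, j) ∈ C) : ∀ z, a ≤ z → z ≤ b → (z, j) ∈ C := by
  refine row_mem_of_adjacent_pair hC hbelow hp (by omega) hpC ?_
  rcases (by omega : q = p + 1 ∨ q = p + 2 ∨ q = p + 3 ∨ q = p + 4) with rfl | rfl | rfl | rfl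
  · exact hqC
  · exact mem_of_below_of_two_in_row hC (hbelow _ (by omega) (by omega)) hpC hqC
  · exact mem_of_below_of_two_in_row hC (hbelow _ (by omega) (by omega)) hpC hqC
  -- a gap of four is first halved through its midpoint
  · have hmid : (p + 2, j) ∈ C :=
      mem_of_below_of_two_in_row hC (hbelow _ (by omega) (by omega)) hpC hqC
    exact mem_of_below_of_two_in_row hC (hbelow _ (by omega) (by omega)) hpC hmid

lemma row_mem_of_pair_in_adjacent_rows {p w : ℤ} (hp : a ≤ p) (hpb : p ≤ b) (hw : a ≤ w)
    (hwb : w ≤ b) (hpw : p ≠ w) (hwp₁ : p ≤ w + 2) (hwp₂ : w ≤ p + 2)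
    (hpC : (p, j) ∈ C) (hwC : (w, j + 1) ∈ C) : ∀ z, a ≤ z → z ≤ b → (z, j) ∈ C := by
  have hwj : (w, j) ∈ C := mem_of_below_of_above_of_in_row hC (hbelow w hw hwb) hwC hpC
  rcases lt_or_gt_of_ne hpw with h | h
  · exact row_mem_of_pair_in_row hC hbelow hp h (by omega) hwb hpC hwj
  · exact row_mem_of_pair_in_row hC hbelow hw h (by omega) hpb hwj hpC

end RowFilling

lemma spanningPair_iff {a b j : ℤ} {P : Set (ℤ × ℤ)} :
    spanningPair a b j P ↔ ∀ C, bootOp nbhd 3 C ⊆ C → P ⊆ C →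
      (∀ z, a ≤ z → z ≤ b → (z, j - 1) ∈ C) → ∀ z, a ≤ z → z ≤ b → (z, j) ∈ C := by
  simp only [spanningPair, subset_bsClosure_iff, Set.union_subset_iff, ← rectF_row_subset_iff]
  exact forall_congr' fun C => by tauto

lemma spanningPair_pair_in_row {a b j p q : ℤ} (hp : a ≤ p) (hpq : p < q) (hqp : q ≤ p + 4)
    (hqb : q ≤ b) : spanningPair a b j {(p, j), (q, j)} :=
  spanningPair_iff.2 fun _ hC hP hbelow =>
    row_mem_of_pair_in_row hC hbelow hp hpq hqp hqb (hP (by simp)) (hP (by simp))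

lemma spanningPair_pair_in_adjacent_rows {a b j p w : ℤ} (hp : a ≤ p) (hpb : p ≤ b) (hw : a ≤ w)
    (hwb : w ≤ b) (hpw : p ≠ w) (hwp₁ : p ≤ w + 2) (hwp₂ : w ≤ p + 2) :
    spanningPair a b j {(p, j), (w, j + 1)} :=
  spanningPair_iff.2 fun _ hC hP hbelow =>
    row_mem_of_pair_in_adjacent_rows hC hbelow hp hpb hw hwb hpw hwp₁ hwp₂ (hP (by simp))
      (hP (by simp))

section NoClosePairs

variable {T : Set (ℤ × ℤ)} {j : ℤ}
  (hrow : ∀ x x', (x, j) ∈ T → (x', j) ∈ T → x < x' → x' ≤ x + 4 → False)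
  (hup : ∀ x x', (x, j) ∈ T → (x', j + 1) ∈ T → x ≠ x' → x ≤ x' + 2 → x' ≤ x + 2 → False)
include hrow hup

lemma ncard_nbrs_except_below_inter_le_one (x : ℤ) :
    ((fun n => (x, j) + n) '' (nbhd.erase (0, -1) : Set (ℤ × ℤ)) ∩ T).ncard ≤ 1 := by
  rw [Set.ncard_le_one ((Set.toFinite _).inter_of_left _)]
  rintro _ ⟨⟨⟨k, l⟩, hn, rfl⟩, h⟩ _ ⟨⟨⟨k', l'⟩, hn', rfl⟩, h'⟩
  simp only [Finset.coe_erase, Set.mem_sdiff, Finset.mem_coe, mem_nbhd_iff, Set.mem_singleton_iff,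
    Prod.mk.injEq] at hn hn'
  simp only [Prod.mk_add_mk] at h h' ⊢
  obtain ⟨⟨rfl, hk⟩ | ⟨rfl, rfl⟩ | ⟨rfl, rfl⟩, hn⟩ := hn <;>
    obtain ⟨⟨rfl, hk'⟩ | ⟨rfl, rfl⟩ | ⟨rfl, rfl⟩, hn'⟩ := hn' <;>
    simp only [add_zero, not_true, and_self] at h h' hn hn' ⊢
  · rcases lt_trichotomy k k' with hlt | rfl | hlt
    · exact (hrow _ _ h h' (by omega) (by omega)).elim
    · rfl
    · exact (hrow _ _ h' h (by omega) (by omega)).elim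
  · exact (hup _ _ h h' (by omega) (by omega) (by omega)).elim
  · exact (hup _ _ h' h (by omega) (by omega) (by omega)).elim

lemma bootOp_union_below_subset (hT : bootOp nbhd 3 T ⊆ T) :
    bootOp nbhd 3 (T ∪ {p | p.2 < j}) ⊆ T ∪ {p | p.2 < j} := by
  rintro ⟨x, y⟩ (hv | hv)
  · exact hv
  by_contra hvU
  simp only [Set.mem_union, Set.mem_ofPred_eq, not_or, not_lt] at hvU
  obtain ⟨hvT, hjy⟩ := hvU
  set nbrs := (fun n => (x, y) + n) '' (nbhd : Set (ℤ × ℤ))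
  rcases hjy.lt_or_eq with hjy | rfl
  · have hsub : nbrs ∩ (T ∪ {p | p.2 < j}) ⊆ nbrs ∩ T := by
      rintro _ ⟨⟨⟨k, l⟩, hn, rfl⟩, h | h⟩
      · exact ⟨⟨_, hn, rfl⟩, h⟩
      · simp only [Finset.mem_coe, mem_nbhd_iff, Prod.mk_add_mk, Set.mem_ofPred_eq,
          Prod.mk.injEq] at hn h
        omega
    exact hvT (hT (Or.inr (hv.trans (Set.ncard_le_ncard hsub ((Set.toFinite _).inter_of_left _)))))
  have hsub : nbrs ∩ (T ∪ {p | p.2 < j}) ⊆ insert ((x, j) + (0, -1))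
      ((fun n => (x, j) + n) '' (nbhd.erase (0, -1) : Set (ℤ × ℤ)) ∩ T) := by
    rintro _ ⟨⟨n, hn, rfl⟩, h | h⟩
    · by_cases hn' : n = (0, -1)
      · exact Or.inl (by rw [hn'])
      · exact Or.inr ⟨⟨n, by simpa [hn'] using hn, rfl⟩, h⟩
    · left
      obtain ⟨k, l⟩ := n
      simp only [Finset.mem_coe, mem_nbhd_iff, Prod.mk_add_mk, Set.mem_ofPred_eq,
        Prod.mk.injEq] at hn h ⊢
      omega
  have := (hv.trans (Set.ncard_le_ncard hsub)).trans (Set.ncard_insert_le _ _)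
  have := ncard_nbrs_except_below_inter_le_one hrow hup x
  omega

end NoClosePairs

lemma exists_spanningPair_of_subset_bsClosure {a b c d j : ℤ} (hab : a + 1 ≤ b)
    {A : Set (ℤ × ℤ)} (hA : A ⊆ (rectF a b c d : Set (ℤ × ℤ)))
    (hR : (rectF a b c d : Set (ℤ × ℤ)) ⊆
      bsClosure nbhd 3 (A ∪ (rectF a b (c - 1) (c - 1) : Set (ℤ × ℤ))))
    (hcj : c ≤ j) (hjd : j ≤ d) :
    ∃ u v : ℤ × ℤ, u ∈ bsClosure nbhd 3 A ∧ v ∈ bsClosure nbhd 3 A ∧ u ≠ v ∧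
      spanningPair a b j {u, v} := by
  by_contra! hno
  set T := bsClosure nbhd 3 A
  have hT : bootOp nbhd 3 T ⊆ T := bootOp_bsClosure_subset A
  have hTR : T ⊆ rectF a b c d := bsClosure_subset_of_bootOp_subset hA (bootOp_rectF_subset a b c d)
  have hrow : ∀ x x', (x, j) ∈ T → (x', j) ∈ T → x < x' → x' ≤ x + 4 → False := by
    intro x x' hx hx' hlt hle
    obtain ⟨hxa, -⟩ := mem_rectF.1 (hTR hx)
    obtain ⟨-, hx'b, -⟩ := mem_rectF.1 (hTR hx')
    exact hno _ _ hx hx' (by simp [hlt.ne]) (spanningPair_pair_in_row hxa hlt hle hx'b)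
  have hup : ∀ x x', (x, j) ∈ T → (x', j + 1) ∈ T → x ≠ x' → x ≤ x' + 2 → x' ≤ x + 2 → False := by
    intro x x' hx hx' hne hle₁ hle₂
    obtain ⟨hxa, hxb, -⟩ := mem_rectF.1 (hTR hx)
    obtain ⟨hx'a, hx'b, -⟩ := mem_rectF.1 (hTR hx')
    exact hno _ _ hx hx' (by simp)
      (spanningPair_pair_in_adjacent_rows hxa hxb hx'a hx'b hne hle₁ hle₂)
  have hU := bootOp_union_below_subset hrow hup hT
  have row_mem : ∀ z, a ≤ z → z ≤ b → (z, j) ∈ T := by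
    intro z hz hzb
    have hsub : A ∪ (rectF a b (c - 1) (c - 1) : Set (ℤ × ℤ)) ⊆ T ∪ {p | p.2 < j} := by
      rintro p (hp | hp)
      · exact Or.inl (subset_bsClosure A hp)
      · obtain ⟨-, -, -, hp⟩ := mem_rectF.1 hp
        exact Or.inr (show p.2 < j by omega)
    exact ((hR.trans (bsClosure_subset_of_bootOp_subset hsub hU))
      (mem_rectF.2 ⟨hz, hzb, hcj, hjd⟩)).resolve_right (lt_irrefl j)
  exact hrow a (a + 1) (row_mem a le_rfl (by omega)) (row_mem (a + 1) (by omega) hab)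
    (by omega) (by omega)

lemma subset_bsClosure_of_spanningPairs {a b c d : ℤ} {A : Set (ℤ × ℤ)}
    (hsp : ∀ j : ℤ, c ≤ j → j ≤ d → ∃ u v : ℤ × ℤ, u ∈ bsClosure nbhd 3 A ∧
      v ∈ bsClosure nbhd 3 A ∧ spanningPair a b j {u, v}) :
    (rectF a b c d : Set (ℤ × ℤ)) ⊆
      bsClosure nbhd 3 (A ∪ (rectF a b (c - 1) (c - 1) : Set (ℤ × ℤ))) := by
  set C := bsClosure nbhd 3 (A ∪ (rectF a b (c - 1) (c - 1) : Set (ℤ × ℤ)))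
  have hC : bootOp nbhd 3 C ⊆ C := bootOp_bsClosure_subset _
  have hAC : bsClosure nbhd 3 A ⊆ C :=
    bsClosure_subset_of_bootOp_subset (Set.subset_union_left.trans (subset_bsClosure _)) hC
  have rows : ∀ j, c - 1 ≤ j → j ≤ d → ∀ z, a ≤ z → z ≤ b → (z, j) ∈ C := by
    intro j hj
    induction j, hj using Int.leInduction with
    | base => exact fun _ z hz hzb => subset_bsClosure _ (Or.inr (by simp [hz, hzb]))
    | succ j hj ih =>
      intro hjd
      obtain ⟨u, v, hu, hv, hspan⟩ := hsp (j + 1) (by omega) hjd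
      refine spanningPair_iff.1 hspan C hC ?_ (by simpa using ih (by omega))
      rintro _ (rfl | rfl)
      exacts [hAC hu, hAC hv]
  rintro ⟨z, y⟩ hp
  obtain ⟨hz, hzb, hy, hyd⟩ := mem_rectF.1 hp
  exact rows y (by omega) hyd z hz hzb

theorem stmt8_general (a b c d : ℤ) (hab : a + 1 ≤ b)
    (A : Set (ℤ × ℤ)) (hA : A ⊆ (rectF a b c d : Set (ℤ × ℤ))) :
    upTrav a b c d A ↔
      ∀ j : ℤ, c ≤ j → j ≤ d →
        ∃ u v : ℤ × ℤ, u ∈ bsClosure nbhd 3 A ∧ v ∈ bsClosure nbhd 3 A ∧ u ≠ v ∧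
          spanningPair a b j {u, v} := by
  rw [upTrav, Set.inter_eq_self_of_subset_right hA]
  refine ⟨fun hR j hcj hjd => exists_spanningPair_of_subset_bsClosure hab hA hR hcj hjd,
    fun hsp => subset_bsClosure_of_spanningPairs fun j hcj hjd => ?_⟩
  obtain ⟨u, v, hu, hv, -, hspan⟩ := hsp j hcj hjd
  exact ⟨u, v, hu, hv, hspan⟩

theorem stmt8 (a b c d : ℤ) (hab : a + 1 ≤ b) (hcd : c ≤ d)
    (A : Set (ℤ × ℤ)) (hA : A ⊆ (rectF a b c d : Set (ℤ × ℤ))) :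
    upTrav a b c d A ↔
      ∀ j : ℤ, c ≤ j → j ≤ d →
        ∃ u v : ℤ × ℤ, u ∈ bsClosure nbhd 3 A ∧ v ∈ bsClosure nbhd 3 A ∧ u ≠ v ∧
          spanningPair a b j {u, v} :=
  stmt8_general a b c d hab A hA
end

section
/- Let f, g : ℝ₊ → ℝ be positive, non-increasing, convex, differentiable functions, and let Δ_{f,g} = {(x,y) ∈ ℝ₊² : f′(x) ≠ 0, g′(y) ≠ 0, f′(x) = g′(y)}. Let a ≤ b be two points of Δ_{f,g} and suppose γ₀ := Δ_{f,g} ∩ ([a₁,b₁]×[a₂,b₂]) is a path from a to b. Then W_{f,g}(a,b) = w_{f,g}(γ₀), i.e. the infimum of the line integral over all paths from a to b is attained along the curve Δ_{f,g}. -/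
/-!
For a path `γ` from `a` to `b` with monotone coordinates, write `f x = f b₁ - ∫_x^{b₁} f'` and
`g y = g b₂ - ∫_y^{b₂} g'` and exchange the order of integration: `w(γ)` becomes
`f b₁ (b₂ - a₂) + g b₂ (b₁ - a₁)` plus the integral over the rectangle `[a, b]` of a kernel equal
to `-f' ξ` at points `(ξ, η)` below the path and to `-g' η` at points to its left. Almost every
point of the rectangle is in exactly one of the two regions, so the kernel is at least
`min (-f' ξ) (-g' η)`. For a path along `Δ_{f,g}` the kernel equals this minimum, because the
derivatives of convex functions are monotone: below such a path `g' η ≤ f' ξ`, to its left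
`f' ξ ≤ g' η`.
-/

open Real

noncomputable def pathW (f g : ℝ → ℝ) (γ : ℝ → ℝ × ℝ) : ℝ :=
  ∫ t in (0:ℝ)..1,
    (f (γ t).1 * deriv (fun s => (γ s).2) t + g (γ t).2 * deriv (fun s => (γ s).1) t)

def IsPath (γ : ℝ → ℝ × ℝ) (A B : ℝ × ℝ) : Prop :=
  ContDiff ℝ 1 γ ∧ γ 0 = A ∧ γ 1 = B ∧
    MonotoneOn (fun t => (γ t).1) (Set.Icc 0 1) ∧
    MonotoneOn (fun t => (γ t).2) (Set.Icc 0 1) ∧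
    ∀ t ∈ Set.Icc (0:ℝ) 1, 0 < (γ t).1 ∧ 0 < (γ t).2

def pathImage (γ : ℝ → ℝ × ℝ) : Set (ℝ × ℝ) := γ '' Set.Icc 0 1

noncomputable def Wmin (f g : ℝ → ℝ) (A B : ℝ × ℝ) : ℝ :=
  sInf {w : ℝ | ∃ γ : ℝ → ℝ × ℝ, IsPath γ A B ∧ w = pathW f g γ}

def DeltaCurve (f g : ℝ → ℝ) : Set (ℝ × ℝ) :=
  {q | 0 < q.1 ∧ 0 < q.2 ∧ deriv f q.1 ≠ 0 ∧ deriv g q.2 ≠ 0 ∧ deriv f q.1 = deriv g q.2}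

def NW (A B : Set (ℝ × ℝ)) : Prop :=
  ∀ u ∈ A, ∀ v ∈ B, u.1 + u.2 = v.1 + v.2 → v.2 ≤ u.2

namespace MonotonePath

open MeasureTheory Set Filter

/-- For a path `t ↦ (u t, v t)` on `[0, 1]` with monotone coordinates, `envelope u v ξ` is the
largest height of the path above the abscissa `ξ`: a point `(ξ, η)` of the rectangle it spans lies
strictly below the path iff `η < envelope u v ξ`, and strictly to its left iff
`ξ < envelope v u η`. When `ξ < u 0` no time has `u t ≤ ξ`, and `sSup ∅ = 0` keeps
`envelope u v` monotone on all of `ℝ`. -/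
noncomputable def lastTime (u : ℝ → ℝ) (ξ : ℝ) : ℝ :=
  sSup {t ∈ Icc (0 : ℝ) 1 | u t ≤ ξ}

noncomputable def envelope (u v : ℝ → ℝ) (ξ : ℝ) : ℝ :=
  v (lastTime u ξ)

section Envelope

variable {u v : ℝ → ℝ} {ξ η t : ℝ}

theorem bddAbove_lastTime_set (u : ℝ → ℝ) (ξ : ℝ) :
    BddAbove {t ∈ Icc (0 : ℝ) 1 | u t ≤ ξ} :=
  ⟨1, fun _ ht => ht.1.2⟩

theorem le_lastTime (ht : t ∈ Icc (0 : ℝ) 1) (h : u t ≤ ξ) : t ≤ lastTime u ξ :=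
  le_csSup (bddAbove_lastTime_set u ξ) ⟨ht, h⟩

theorem lastTime_mem (hu : Continuous u) (hξ : u 0 ≤ ξ) :
    lastTime u ξ ∈ Icc (0 : ℝ) 1 ∧ u (lastTime u ξ) ≤ ξ :=
  (isClosed_Icc.inter (isClosed_Iic.preimage hu)).csSup_mem
    ⟨0, ⟨le_rfl, zero_le_one⟩, hξ⟩ (bddAbove_lastTime_set u ξ)

theorem lastTime_of_lt (hum : MonotoneOn u (Icc 0 1)) (hξ : ξ < u 0) : lastTime u ξ = 0 := by
  have : {t ∈ Icc (0 : ℝ) 1 | u t ≤ ξ} = ∅ :=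
    eq_empty_of_forall_notMem fun t ⟨ht, hle⟩ =>
      (hξ.trans_le (hum ⟨le_rfl, zero_le_one⟩ ht ht.1)).not_ge hle
  rw [lastTime, this, Real.sSup_empty]

theorem setOf_le_inter_Ioc (hu : Continuous u) (hum : MonotoneOn u (Icc 0 1))
    (hξ : u 0 ≤ ξ) : {t | u t ≤ ξ} ∩ Ioc 0 1 = Ioc 0 (lastTime u ξ) := by
  obtain ⟨hT, hTξ⟩ := lastTime_mem hu hξ
  ext t
  constructor
  · rintro ⟨hle, h0, h1⟩
    exact ⟨h0, le_lastTime ⟨h0.le, h1⟩ hle⟩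
  · rintro ⟨h0, htT⟩
    exact ⟨(hum ⟨h0.le, htT.trans hT.2⟩ hT htT).trans hTξ, h0, htT.trans hT.2⟩

/-- Right after `lastTime v η` the function `v` stays above `η`, so by continuity it equals `η`
there. -/
theorem apply_lastTime (hv : Continuous v) (h0 : v 0 ≤ η) (h1 : η ≤ v 1) :
    v (lastTime v η) = η := by
  obtain ⟨hT, hTη⟩ := lastTime_mem hv h0
  refine hTη.antisymm (not_lt.1 fun hlt => ?_)
  have hT1 : lastTime v η < 1 := hT.2.lt_of_ne fun h => by rw [h] at hlt; linarith
  obtain ⟨t, hvt, hTt, ht1⟩ :=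
    (((hv.continuousAt.eventually (gt_mem_nhds hlt)).filter_mono nhdsWithin_le_nhds).and
      (Ioc_mem_nhdsGT hT1)).exists
  exact hTt.not_ge (le_lastTime ⟨hT.1.trans hTt.le, ht1⟩ hvt.le)

theorem monotone_envelope (hu : Continuous u) (hum : MonotoneOn u (Icc 0 1))
    (hvm : MonotoneOn v (Icc 0 1)) : Monotone (envelope u v) := by
  intro ξ ξ' hle
  rcases lt_or_ge ξ (u 0) with hξ | hξ
  · rw [envelope, lastTime_of_lt hum hξ]
    rcases lt_or_ge ξ' (u 0) with hξ' | hξ'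
    · rw [envelope, lastTime_of_lt hum hξ']
    · obtain ⟨hT', -⟩ := lastTime_mem hu hξ'
      exact hvm ⟨le_rfl, zero_le_one⟩ hT' hT'.1
  · obtain ⟨hT, hTξ⟩ := lastTime_mem hu hξ
    exact hvm hT (lastTime_mem hu (hξ.trans hle)).1 (le_lastTime hT (hTξ.trans hle))

theorem envelope_mem_Icc (hu : Continuous u) (hvm : MonotoneOn v (Icc 0 1)) (hξ : u 0 ≤ ξ) :
    envelope u v ξ ∈ Icc (v 0) (v 1) := by
  obtain ⟨hT, -⟩ := lastTime_mem hu hξ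
  exact ⟨hvm ⟨le_rfl, zero_le_one⟩ hT hT.1, hvm hT ⟨zero_le_one, le_rfl⟩ hT.2⟩

theorem lt_envelope_iff (hu : Continuous u) (hvm : MonotoneOn v (Icc 0 1)) (hξ : u 0 ≤ ξ) :
    η < envelope u v ξ ↔ ∃ s ∈ Icc (0 : ℝ) 1, u s ≤ ξ ∧ η < v s := by
  obtain ⟨hT, hTξ⟩ := lastTime_mem hu hξ
  refine ⟨fun h => ⟨_, hT, hTξ, h⟩, ?_⟩
  rintro ⟨s, hs, hsξ, hηs⟩
  exact hηs.trans_le (hvm hs hT (le_lastTime hs hsξ))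

theorem not_lt_envelope_of_lt_envelope (hu : Continuous u) (hv : Continuous v)
    (hum : MonotoneOn u (Icc 0 1)) (hvm : MonotoneOn v (Icc 0 1)) (hξ : u 0 ≤ ξ)
    (hη : v 0 ≤ η) (h : η < envelope u v ξ) : ¬ ξ < envelope v u η := by
  rw [lt_envelope_iff hv hum hη]
  rintro ⟨r, hr, hrη, hξr⟩
  obtain ⟨s, hs, hsξ, hηs⟩ := (lt_envelope_iff hu hvm hξ).1 h
  rcases le_total s r with hsr | hrs
  · exact (hηs.trans_le (hvm hs hr hsr)).not_ge hrη
  · exact (hξr.trans_le (hum hr hs hrs)).not_ge hsξ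

theorem lt_envelope_of_envelope_lt (hu : Continuous u) (hv : Continuous v)
    (hum : MonotoneOn u (Icc 0 1)) (hvm : MonotoneOn v (Icc 0 1)) (hη : v 0 ≤ η) (hη' : η ≤ v 1)
    (h : envelope u v ξ < η) : ξ < envelope v u η := by
  by_contra! hξ
  obtain ⟨hT, -⟩ := lastTime_mem hv hη
  have hu0 : u 0 ≤ ξ := (hum ⟨le_rfl, zero_le_one⟩ hT hT.1).trans hξ
  have : η ≤ envelope u v ξ := by
    calc η = v (lastTime v η) := (apply_lastTime hv hη hη').symm
      _ ≤ envelope u v ξ := hvm hT (lastTime_mem hu hu0).1 (le_lastTime hT hξ)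
  exact h.not_ge this

end Envelope


theorem integral_Icc_indicator_Ici_deriv {h : ℝ → ℝ} {a b x : ℝ}
    (hd : ∀ z ∈ Icc a b, DifferentiableAt ℝ h z) (hi : IntegrableOn (deriv h) (Icc a b))
    (hx : x ∈ Icc a b) :
    ∫ ξ in Icc a b, (Ici x).indicator (deriv h) ξ = h b - h x := by
  have hsub : Icc x b ⊆ Icc a b := Icc_subset_Icc_left hx.1
  have hinter : Ici x ∩ Icc a b = Icc x b := by
    rw [← Ici_inter_Iic, ← Ici_inter_Iic, ← inter_assoc, Ici_inter_Ici, max_eq_left hx.1]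
  rw [integral_indicator measurableSet_Ici, Measure.restrict_restrict measurableSet_Ici,
    hinter, integral_Icc_eq_integral_Ioc,
    ← intervalIntegral.integral_of_le hx.2]
  refine intervalIntegral.integral_eq_sub_of_hasDerivAt (fun z hz => ?_) ?_
  · rw [uIcc_of_le hx.2] at hz
    exact (hd z (hsub hz)).hasDerivAt
  · exact (intervalIntegrable_iff_integrableOn_Icc_of_le hx.2).2 (hi.mono_set hsub)

theorem integral_Ioc_indicator_deriv {u v : ℝ → ℝ} {ξ : ℝ} (hu : Continuous u)
    (hum : MonotoneOn u (Icc 0 1)) (hv : ContDiff ℝ 1 v) (hξ : u 0 ≤ ξ) :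
    ∫ t in Ioc 0 1, {t | u t ≤ ξ}.indicator (deriv v) t = envelope u v ξ - v 0 := by
  have hmeas : MeasurableSet {t | u t ≤ ξ} := (isClosed_Iic.preimage hu).measurableSet
  rw [integral_indicator hmeas, Measure.restrict_restrict hmeas, setOf_le_inter_Ioc hu hum hξ,
    ← intervalIntegral.integral_of_le (lastTime_mem hu hξ).1.1,
    intervalIntegral.integral_deriv_eq_sub (fun z _ => hv.differentiable one_ne_zero z)
      ((hv.continuous_deriv le_rfl).intervalIntegrable _ _), envelope]

/-- Layer-cake form of `∫ (h (u 1) - h ∘ u) dv`: write `h (u 1) - h (u t)` as the integral of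
`deriv h` over `[u t, u 1]` and exchange the two integrals. -/
theorem integral_sub_comp_mul_deriv {h u v : ℝ → ℝ} (hu : Continuous u)
    (hum : MonotoneOn u (Icc 0 1)) (hv : ContDiff ℝ 1 v)
    (hd : ∀ z ∈ Icc (u 0) (u 1), DifferentiableAt ℝ h z)
    (hi : IntegrableOn (deriv h) (Icc (u 0) (u 1))) :
    ∫ t in Ioc 0 1, (h (u 1) - h (u t)) * deriv v t
      = ∫ ξ in Icc (u 0) (u 1), deriv h ξ * (envelope u v ξ - v 0) := by
  set F : ℝ × ℝ → ℝ := {q | u q.1 ≤ q.2}.indicator fun q => deriv v q.1 * deriv h q.2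
  have hF : Integrable F ((volume.restrict (Ioc 0 1)).prod (volume.restrict (Icc (u 0) (u 1)))) :=
    ((((hv.continuous_deriv le_rfl).integrableOn_Icc).mono_set Ioc_subset_Icc_self).mul_prod
      hi).indicator (measurableSet_le (hu.measurable.comp measurable_fst) measurable_snd)
  have hu01 : ∀ t ∈ Icc (0 : ℝ) 1, u t ∈ Icc (u 0) (u 1) := fun t ht =>
    ⟨hum ⟨le_rfl, zero_le_one⟩ ht ht.1, hum ht ⟨zero_le_one, le_rfl⟩ ht.2⟩
  calc ∫ t in Ioc 0 1, (h (u 1) - h (u t)) * deriv v t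
      = ∫ t in Ioc 0 1, ∫ ξ in Icc (u 0) (u 1), F (t, ξ) := by
        refine setIntegral_congr_fun measurableSet_Ioc fun t ht => ?_
        have : ∀ ξ, F (t, ξ) = deriv v t * (Ici (u t)).indicator (deriv h) ξ := fun ξ => by
          simp only [F, indicator_apply, mem_ofPred_eq, mem_Ici]
          split_ifs <;> simp
        simp only [this, integral_const_mul,
          integral_Icc_indicator_Ici_deriv hd hi (hu01 t (Ioc_subset_Icc_self ht))]
        ring
    _ = ∫ ξ in Icc (u 0) (u 1), ∫ t in Ioc 0 1, F (t, ξ) := integral_integral_swap hF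
    _ = ∫ ξ in Icc (u 0) (u 1), deriv h ξ * (envelope u v ξ - v 0) := by
        refine setIntegral_congr_fun measurableSet_Icc fun ξ hξ => ?_
        have : ∀ t, F (t, ξ) = deriv h ξ * {t | u t ≤ ξ}.indicator (deriv v) t := fun t => by
          simp only [F, indicator_apply, mem_ofPred_eq]
          split_ifs <;> simp [mul_comm]
        simp only [this, integral_const_mul, integral_Ioc_indicator_deriv hu hum hv hξ.1]

theorem intervalIntegrable_comp_mul_deriv {h u v : ℝ → ℝ} (hu : Continuous u)
    (hum : MonotoneOn u (Icc 0 1)) (hv : ContDiff ℝ 1 v)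
    (hd : ∀ z ∈ Icc (u 0) (u 1), DifferentiableAt ℝ h z) :
    IntervalIntegrable (fun t => h (u t) * deriv v t) volume 0 1 := by
  refine ContinuousOn.intervalIntegrable ?_
  rw [uIcc_of_le zero_le_one]
  refine ContinuousOn.mul (fun t ht => ?_) (hv.continuous_deriv le_rfl).continuousOn
  have hut : u t ∈ Icc (u 0) (u 1) :=
    ⟨hum ⟨le_rfl, zero_le_one⟩ ht ht.1, hum ht ⟨zero_le_one, le_rfl⟩ ht.2⟩
  exact ((hd _ hut).continuousAt.comp hu.continuousAt).continuousWithinAt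

noncomputable def rectVolume (a b : ℝ × ℝ) : Measure (ℝ × ℝ) :=
  (volume.restrict (Icc a.1 b.1)).prod (volume.restrict (Icc a.2 b.2))

noncomputable def belowGraph (Y w : ℝ → ℝ) : ℝ × ℝ → ℝ :=
  {p : ℝ × ℝ | p.2 < Y p.1}.indicator fun p => w p.1

theorem integrable_belowGraph {w Y : ℝ → ℝ} {a b : ℝ × ℝ} (hw : IntegrableOn w (Icc a.1 b.1))
    (hY : Measurable Y) : Integrable (belowGraph Y w) (rectVolume a b) :=
  (hw.comp_fst _).indicator (measurableSet_lt measurable_snd (hY.comp measurable_fst))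

theorem integral_mul_sub_eq_integral_belowGraph {w Y : ℝ → ℝ} {a b : ℝ × ℝ}
    (hw : IntegrableOn w (Icc a.1 b.1)) (hY : Measurable Y)
    (hYab : ∀ ξ ∈ Icc a.1 b.1, Y ξ ∈ Icc a.2 b.2) :
    ∫ ξ in Icc a.1 b.1, w ξ * (Y ξ - a.2) = ∫ p, belowGraph Y w p ∂rectVolume a b := by
  rw [rectVolume, integral_prod _ (integrable_belowGraph hw hY)]
  refine setIntegral_congr_fun measurableSet_Icc fun ξ hξ => ?_
  have hinter : Iio (Y ξ) ∩ Icc a.2 b.2 = Ico a.2 (Y ξ) := by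
    ext η
    exact ⟨fun ⟨h, h₁, _⟩ => ⟨h₁, h⟩, fun ⟨h₁, h⟩ => ⟨h, h₁, h.le.trans (hYab ξ hξ).2⟩⟩
  change _ = ∫ η in Icc a.2 b.2, (Iio (Y ξ)).indicator (fun _ => w ξ) η
  rw [integral_indicator measurableSet_Iio, Measure.restrict_restrict measurableSet_Iio, hinter,
    setIntegral_const, Real.volume_real_Ico_of_le (hYab ξ hξ).1, smul_eq_mul, mul_comm]

theorem intervalIntegral_comp_mul_deriv {h u v : ℝ → ℝ} (hu : Continuous u)
    (hum : MonotoneOn u (Icc 0 1)) (hv : ContDiff ℝ 1 v) (hvm : MonotoneOn v (Icc 0 1))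
    (hd : ∀ z ∈ Icc (u 0) (u 1), DifferentiableAt ℝ h z)
    (hi : IntegrableOn (deriv h) (Icc (u 0) (u 1))) :
    ∫ t in (0 : ℝ)..1, h (u t) * deriv v t
      = h (u 1) * (v 1 - v 0) + ∫ p, belowGraph (envelope u v) (fun ξ => -deriv h ξ) p
          ∂rectVolume (u 0, v 0) (u 1, v 1) := by
  have hdv := hv.continuous_deriv le_rfl
  have hsplit : ∫ t in (0 : ℝ)..1, (h (u 1) - h (u t)) * deriv v t
      = h (u 1) * (v 1 - v 0) - ∫ t in (0 : ℝ)..1, h (u t) * deriv v t := by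
    simp only [sub_mul]
    rw [intervalIntegral.integral_sub ((hdv.intervalIntegrable _ _).const_mul _)
        (intervalIntegrable_comp_mul_deriv hu hum hv hd), intervalIntegral.integral_const_mul,
      intervalIntegral.integral_deriv_eq_sub (fun z _ => hv.differentiable one_ne_zero z)
        (hdv.intervalIntegrable _ _)]
  rw [← integral_mul_sub_eq_integral_belowGraph (w := fun ξ => -deriv h ξ) hi.neg
      (monotone_envelope hu hum hvm).measurable fun ξ hξ => envelope_mem_Icc hu hvm hξ.1]
  simp only [neg_mul, integral_neg]
  rw [← integral_sub_comp_mul_deriv hu hum hv hd hi, ← intervalIntegral.integral_of_le zero_le_one,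
    hsplit]
  ring

/-- Up to boundary terms, `pathW f g` of a monotone path is the integral of `pathKernel` over the
rectangle it spans: the region below the path carries the weight `-f'`, the region to its left
the weight `-g'`. -/
noncomputable def pathKernel (f g u v : ℝ → ℝ) (p : ℝ × ℝ) : ℝ :=
  belowGraph (envelope u v) (fun ξ => -deriv f ξ) p
    + belowGraph (envelope v u) (fun η => -deriv g η) p.swap

theorem integral_rectVolume_swap (F : ℝ × ℝ → ℝ) (a b : ℝ × ℝ) :
    ∫ q, F q ∂rectVolume a.swap b.swap = ∫ p, F p.swap ∂rectVolume a b :=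
  (integral_prod_swap F).symm

theorem pathW_eq {f g : ℝ → ℝ} {γ : ℝ → ℝ × ℝ} {a b : ℝ × ℝ} (hγ : ContDiff ℝ 1 γ)
    (h0 : γ 0 = a) (h1 : γ 1 = b) (hxm : MonotoneOn (fun t => (γ t).1) (Icc 0 1))
    (hym : MonotoneOn (fun t => (γ t).2) (Icc 0 1))
    (hfd : ∀ x ∈ Icc a.1 b.1, DifferentiableAt ℝ f x) (hfi : IntegrableOn (deriv f) (Icc a.1 b.1))
    (hgd : ∀ y ∈ Icc a.2 b.2, DifferentiableAt ℝ g y) (hgi : IntegrableOn (deriv g) (Icc a.2 b.2)) :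
    pathW f g γ = f b.1 * (b.2 - a.2) + g b.2 * (b.1 - a.1)
      + ∫ p, pathKernel f g (fun t => (γ t).1) (fun t => (γ t).2) p ∂rectVolume a b := by
  set u := fun t => (γ t).1
  set v := fun t => (γ t).2
  obtain rfl : a = (u 0, v 0) := h0 ▸ rfl
  obtain rfl : b = (u 1, v 1) := h1 ▸ rfl
  have hu : ContDiff ℝ 1 u := contDiff_fst.comp hγ
  have hv : ContDiff ℝ 1 v := contDiff_snd.comp hγ
  have hfin := integrable_belowGraph (w := fun ξ => -deriv f ξ) (a := (u 0, v 0))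
    (b := (u 1, v 1)) hfi.neg (monotone_envelope hu.continuous hxm hym).measurable
  have hgin := (integrable_belowGraph (w := fun η => -deriv g η) (a := (v 0, u 0))
    (b := (v 1, u 1)) hgi.neg (monotone_envelope hv.continuous hym hxm).measurable).swap
  rw [pathW, intervalIntegral.integral_add
      (intervalIntegrable_comp_mul_deriv hu.continuous hxm hv hfd)
      (intervalIntegrable_comp_mul_deriv hv.continuous hym hu hgd),
    intervalIntegral_comp_mul_deriv hu.continuous hxm hv hym hfd hfi,
    intervalIntegral_comp_mul_deriv hv.continuous hym hu hxm hgd hgi,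
    show (v 0, u 0) = (u 0, v 0).swap from rfl, show (v 1, u 1) = (u 1, v 1).swap from rfl,
    integral_rectVolume_swap]
  have hker : ∫ p, pathKernel f g u v p ∂rectVolume (u 0, v 0) (u 1, v 1)
      = ∫ p, belowGraph (envelope u v) (fun ξ => -deriv f ξ) p ∂rectVolume (u 0, v 0) (u 1, v 1)
        + ∫ p, belowGraph (envelope v u) (fun η => -deriv g η) p.swap
            ∂rectVolume (u 0, v 0) (u 1, v 1) :=
    integral_add hfin hgin
  rw [hker]
  ring

theorem integrable_pathKernel {f g u v : ℝ → ℝ} (hu : Continuous u) (hv : Continuous v)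
    (hum : MonotoneOn u (Icc 0 1)) (hvm : MonotoneOn v (Icc 0 1))
    (hfi : IntegrableOn (deriv f) (Icc (u 0) (u 1)))
    (hgi : IntegrableOn (deriv g) (Icc (v 0) (v 1))) :
    Integrable (pathKernel f g u v) (rectVolume (u 0, v 0) (u 1, v 1)) :=
  (integrable_belowGraph (w := fun ξ => -deriv f ξ) hfi.neg
    (monotone_envelope hu hum hvm).measurable).add
  (integrable_belowGraph (w := fun η => -deriv g η) (a := (v 0, u 0)) (b := (v 1, u 1)) hgi.neg
    (monotone_envelope hv hvm hum).measurable).swap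

theorem ae_prod_snd_ne {α : Type*} [MeasurableSpace α] {μ : Measure α} {ν : Measure ℝ}
    [SFinite ν] [NullSingletonClass ν] {Y : α → ℝ} (hY : Measurable Y) :
    ∀ᵐ p ∂μ.prod ν, p.2 ≠ Y p.1 :=
  (Measure.ae_prod_mem_iff_ae_ae_mem (measurableSet_graph hY).compl).2
    (ae_of_all _ fun x => ν.ae_ne (Y x))

theorem ae_rectVolume_mem_and_ne (a b : ℝ × ℝ) {Y : ℝ → ℝ} (hY : Measurable Y) :
    ∀ᵐ p ∂rectVolume a b, p ∈ Icc a.1 b.1 ×ˢ Icc a.2 b.2 ∧ p.2 ≠ Y p.1 := by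
  refine Eventually.and ?_ (ae_prod_snd_ne hY)
  rw [rectVolume, Measure.prod_restrict]
  exact ae_restrict_mem (measurableSet_Icc.prod measurableSet_Icc)

section Kernel

variable {f g u v : ℝ → ℝ} {p : ℝ × ℝ}

/-- Off the graph of the envelope, a point of the rectangle lies either below or to the left of
the path, never both. -/
theorem pathKernel_eq (hu : Continuous u) (hv : Continuous v) (hum : MonotoneOn u (Icc 0 1))
    (hvm : MonotoneOn v (Icc 0 1)) (hp : p ∈ Icc (u 0) (u 1) ×ˢ Icc (v 0) (v 1))
    (hne : p.2 ≠ envelope u v p.1) :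
    pathKernel f g u v p = if p.2 < envelope u v p.1 then -deriv f p.1 else -deriv g p.2 := by
  obtain ⟨⟨hp1, -⟩, hp2, hp2'⟩ := hp
  by_cases hb : p.2 < envelope u v p.1
  · have hl := not_lt_envelope_of_lt_envelope hu hv hum hvm hp1 hp2 hb
    simp [pathKernel, belowGraph, hb, hl]
  · have hl := lt_envelope_of_envelope_lt hu hv hum hvm hp2 hp2'
      ((not_lt.1 hb).lt_of_ne hne.symm)
    simp [pathKernel, belowGraph, hb, hl]

theorem min_le_pathKernel (hu : Continuous u) (hv : Continuous v) (hum : MonotoneOn u (Icc 0 1))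
    (hvm : MonotoneOn v (Icc 0 1)) (hp : p ∈ Icc (u 0) (u 1) ×ˢ Icc (v 0) (v 1))
    (hne : p.2 ≠ envelope u v p.1) :
    min (-deriv f p.1) (-deriv g p.2) ≤ pathKernel f g u v p := by
  rw [pathKernel_eq hu hv hum hvm hp hne]
  split_ifs
  exacts [min_le_left _ _, min_le_right _ _]

/-- Along a path in `DeltaCurve f g` the kernel is the smaller weight: a point below the path has
a point `(u s, v s)` of the path to its upper left, and monotonicity of the derivatives gives
`g' p.2 ≤ g' (v s) = f' (u s) ≤ f' p.1`; symmetrically to the left of the path. -/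
theorem pathKernel_le_min (hfm : MonotoneOn (deriv f) (Ioi 0))
    (hgm : MonotoneOn (deriv g) (Ioi 0)) (hΔ : ∀ s ∈ Icc (0 : ℝ) 1, (u s, v s) ∈ DeltaCurve f g)
    (hu : Continuous u) (hv : Continuous v) (hum : MonotoneOn u (Icc 0 1))
    (hvm : MonotoneOn v (Icc 0 1)) (hp : p ∈ Icc (u 0) (u 1) ×ˢ Icc (v 0) (v 1))
    (hne : p.2 ≠ envelope u v p.1) :
    pathKernel f g u v p ≤ min (-deriv f p.1) (-deriv g p.2) := by
  obtain ⟨hu0, hv0, -⟩ := hΔ 0 ⟨le_rfl, zero_le_one⟩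
  have hp1 : 0 < p.1 := hu0.trans_le hp.1.1
  have hp2 : 0 < p.2 := hv0.trans_le hp.2.1
  rw [pathKernel_eq hu hv hum hvm hp hne]
  split_ifs with hb
  · obtain ⟨s, hs, hsp, hps⟩ := (lt_envelope_iff hu hvm hp.1.1).1 hb
    obtain ⟨hs1, hs2, -, -, hfg⟩ := hΔ s hs
    refine le_min le_rfl (neg_le_neg ?_)
    calc deriv g p.2 ≤ deriv g (v s) := hgm hp2 hs2 hps.le
      _ = deriv f (u s) := hfg.symm
      _ ≤ deriv f p.1 := hfm hs1 hp1 hsp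
  · have hl := lt_envelope_of_envelope_lt hu hv hum hvm hp.2.1 hp.2.2
      ((not_lt.1 hb).lt_of_ne hne.symm)
    obtain ⟨s, hs, hsp, hps⟩ := (lt_envelope_iff hv hum hp.2.1).1 hl
    obtain ⟨hs1, hs2, -, -, hfg⟩ := hΔ s hs
    refine le_min (neg_le_neg ?_) le_rfl
    calc deriv f p.1 ≤ deriv f (u s) := hfm hp1 hs1 hps.le
      _ = deriv g (v s) := hfg
      _ ≤ deriv g p.2 := hgm hs2 hp2 hsp

end Kernel

theorem pathW_le_of_mem_deltaCurve {f g : ℝ → ℝ} {A B : ℝ × ℝ} {γ₀ γ : ℝ → ℝ × ℝ}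
    (hfd : ∀ x ∈ Ioi (0 : ℝ), DifferentiableAt ℝ f x)
    (hgd : ∀ y ∈ Ioi (0 : ℝ), DifferentiableAt ℝ g y)
    (hfm : MonotoneOn (deriv f) (Ioi 0)) (hgm : MonotoneOn (deriv g) (Ioi 0))
    (h₀ : IsPath γ₀ A B) (hΔ : ∀ s ∈ Icc (0 : ℝ) 1, γ₀ s ∈ DeltaCurve f g)
    (hγ : IsPath γ A B) :
    pathW f g γ₀ ≤ pathW f g γ := by
  obtain ⟨hγ₀, h₀0, h₀1, hx₀, hy₀, -⟩ := h₀
  obtain ⟨hγ, h0, h1, hx, hy, hpos⟩ := hγ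
  obtain ⟨hA1, hA2⟩ : 0 < A.1 ∧ 0 < A.2 := h0 ▸ hpos 0 ⟨le_rfl, zero_le_one⟩
  have hfd' : ∀ x ∈ Icc A.1 B.1, DifferentiableAt ℝ f x := fun x hx => hfd x (hA1.trans_le hx.1)
  have hgd' : ∀ y ∈ Icc A.2 B.2, DifferentiableAt ℝ g y := fun y hy => hgd y (hA2.trans_le hy.1)
  have hfi : IntegrableOn (deriv f) (Icc A.1 B.1) :=
    (hfm.mono fun x hx => hA1.trans_le hx.1).integrableOn_isCompact isCompact_Icc
  have hgi : IntegrableOn (deriv g) (Icc A.2 B.2) :=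
    (hgm.mono fun y hy => hA2.trans_le hy.1).integrableOn_isCompact isCompact_Icc
  rw [pathW_eq hγ₀ h₀0 h₀1 hx₀ hy₀ hfd' hfi hgd' hgi, pathW_eq hγ h0 h1 hx hy hfd' hfi hgd' hgi]
  subst h₀0 h₀1
  have hΔ' : ∀ s ∈ Icc (0 : ℝ) 1, ((γ₀ s).1, (γ₀ s).2) ∈ DeltaCurve f g := hΔ
  have hrect : Icc (γ 0).1 (γ 1).1 ×ˢ Icc (γ 0).2 (γ 1).2
      = Icc (γ₀ 0).1 (γ₀ 1).1 ×ˢ Icc (γ₀ 0).2 (γ₀ 1).2 := by rw [h0, h1]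
  have hγint : Integrable (pathKernel f g (fun t => (γ t).1) (fun t => (γ t).2))
      (rectVolume (γ₀ 0) (γ₀ 1)) := by
    rw [← h0, ← h1] at hfi hgi ⊢
    exact integrable_pathKernel hγ.continuous.fst hγ.continuous.snd hx hy hfi hgi
  refine add_le_add le_rfl (integral_mono_ae
    (integrable_pathKernel hγ₀.continuous.fst hγ₀.continuous.snd hx₀ hy₀ hfi hgi) hγint ?_)
  filter_upwards [ae_rectVolume_mem_and_ne (γ₀ 0) (γ₀ 1)
      (monotone_envelope hγ₀.continuous.fst hx₀ hy₀).measurable,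
    ae_rectVolume_mem_and_ne (γ₀ 0) (γ₀ 1)
      (monotone_envelope hγ.continuous.fst hx hy).measurable] with p ⟨hp, hp₀⟩ hp'
  exact (pathKernel_le_min hfm hgm hΔ' hγ₀.continuous.fst hγ₀.continuous.snd hx₀ hy₀ hp hp₀).trans
    (min_le_pathKernel hγ.continuous.fst hγ.continuous.snd hx hy (hrect ▸ hp) hp'.2)

end MonotonePath

theorem stmt17_general (f g : ℝ → ℝ)
    (hfconv : ConvexOn ℝ (Set.Ioi 0) f) (hgconv : ConvexOn ℝ (Set.Ioi 0) g)
    (hfdiff : ∀ x ∈ Set.Ioi (0:ℝ), DifferentiableAt ℝ f x)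
    (hgdiff : ∀ y ∈ Set.Ioi (0:ℝ), DifferentiableAt ℝ g y)
    (A B : ℝ × ℝ)
    (γ₀ : ℝ → ℝ × ℝ) (h₀ : IsPath γ₀ A B)
    (him : pathImage γ₀ = DeltaCurve f g ∩ Set.Icc A.1 B.1 ×ˢ Set.Icc A.2 B.2) :
    Wmin f g A B = pathW f g γ₀ := by
  refine IsLeast.csInf_eq ⟨⟨γ₀, h₀, rfl⟩, ?_⟩
  rintro _ ⟨γ, hγ, rfl⟩
  exact MonotonePath.pathW_le_of_mem_deltaCurve hfdiff hgdiff (hfconv.monotoneOn_deriv hfdiff)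
    (hgconv.monotoneOn_deriv hgdiff) h₀ (fun s hs => (him.subset ⟨s, hs, rfl⟩).1) hγ

theorem stmt17 (f g : ℝ → ℝ)
    (hfpos : ∀ x ∈ Set.Ioi (0:ℝ), 0 < f x) (hgpos : ∀ y ∈ Set.Ioi (0:ℝ), 0 < g y)
    (hfmono : AntitoneOn f (Set.Ioi 0)) (hgmono : AntitoneOn g (Set.Ioi 0))
    (hfconv : ConvexOn ℝ (Set.Ioi 0) f) (hgconv : ConvexOn ℝ (Set.Ioi 0) g)
    (hfdiff : ∀ x ∈ Set.Ioi (0:ℝ), DifferentiableAt ℝ f x)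
    (hgdiff : ∀ y ∈ Set.Ioi (0:ℝ), DifferentiableAt ℝ g y)
    (A B : ℝ × ℝ) (hA : A ∈ DeltaCurve f g) (hB : B ∈ DeltaCurve f g)
    (hAB1 : A.1 ≤ B.1) (hAB2 : A.2 ≤ B.2)
    (γ₀ : ℝ → ℝ × ℝ) (h₀ : IsPath γ₀ A B)
    (him : pathImage γ₀ = DeltaCurve f g ∩ Set.Icc A.1 B.1 ×ˢ Set.Icc A.2 B.2) :
    Wmin f g A B = pathW f g γ₀ :=
  stmt17_general f g hfconv hgconv hfdiff hgdiff A B γ₀ h₀ him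
end
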